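/- arXiv:1906.12334 — 2 statements merged into one kernel-verified Lean document; each statement's English description precedes it below -/
import Mathlib

section
/- Let G = (V, E) be a finite simple undirected graph, let k ∈ ℕ, and let e = (u, v) be an edge joining two non-adjacent vertices of G with u ∈ V(C_k(G)) and v ∈ V(C_k(G)). Then e has no followers: V(C_k(G + e)) = V(C_k(G)). -/
open SimpleGraph

variable {V : Type*}

/-- The vertex set of the `k`-core of `G`: the largest set `S` such that every
vertex of `S` has at least `k` neighbors in `S` (realized as the union of all
such sets). -/
def coreSet (G : SimpleGraph V) (k : ℕ) : Set V :=
  {u | ∃ S : Set V, u ∈ S ∧ ∀ v ∈ S, k ≤ (S ∩ G.neighborSet v).ncard}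

/-- The followers of a set `A` of anchor edges: vertices of the `k`-core of `G + A`
that are not in the `k`-core of `G`. -/
def followers (G : SimpleGraph V) (k : ℕ) (A : Set (Sym2 V)) : Set V :=
  coreSet (G ⊔ SimpleGraph.fromEdgeSet A) k \ coreSet G k

lemma neighborSet_sup_fromEdgeSet_singleton {G : SimpleGraph V} {u v w : V}
    (hwu : w ≠ u) (hwv : w ≠ v) :
    (G ⊔ fromEdgeSet {s(u, v)}).neighborSet w = G.neighborSet w := by
  ext a
  simp [hwu, hwv]

lemma subset_coreSet {G : SimpleGraph V} {k : ℕ} {S : Set V}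
    (hS : ∀ v ∈ S, k ≤ (S ∩ G.neighborSet v).ncard) : S ⊆ coreSet G k :=
  fun _ hx => ⟨S, hx, hS⟩

section Finite

variable [Finite V] {G H : SimpleGraph V} {k : ℕ}

lemma le_ncard_coreSet_inter_neighborSet {w : V} (hw : w ∈ coreSet G k) :
    k ≤ (coreSet G k ∩ G.neighborSet w).ncard := by
  obtain ⟨S, hwS, hS⟩ := hw
  calc k ≤ (S ∩ G.neighborSet w).ncard := hS w hwS
    _ ≤ _ := Set.ncard_le_ncard
      (Set.inter_subset_inter_left _ (subset_coreSet hS)) (Set.toFinite _)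

lemma le_ncard_inter_neighborSet_of_subset {S T : Set V} {w : V} (hST : S ⊆ T)
    (hGH : G.neighborSet w ⊆ H.neighborSet w) :
    (S ∩ G.neighborSet w).ncard ≤ (T ∩ H.neighborSet w).ncard :=
  Set.ncard_le_ncard (Set.inter_subset_inter hST hGH) (Set.toFinite _)

lemma coreSet_mono (hGH : G ≤ H) : coreSet G k ⊆ coreSet H k := by
  rintro x ⟨S, hxS, hS⟩
  exact ⟨S, hxS, fun w hw =>
    (hS w hw).trans (le_ncard_inter_neighborSet_of_subset le_rfl fun _ h => hGH h)⟩

/-- Vertices outside the core of `G` see no new neighbours in `H`, so the union of the two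
cores is already a `k`-closed set of `G`. -/
lemma coreSet_subset_of_neighborSet_subset
    (h : ∀ w ∉ coreSet G k, H.neighborSet w ⊆ G.neighborSet w) :
    coreSet H k ⊆ coreSet G k := by
  refine fun x hx => subset_coreSet (S := coreSet H k ∪ coreSet G k) (fun w hw => ?_) (.inl hx)
  by_cases hwG : w ∈ coreSet G k
  · exact (le_ncard_coreSet_inter_neighborSet hwG).trans
      (le_ncard_inter_neighborSet_of_subset Set.subset_union_right le_rfl)
  · exact (le_ncard_coreSet_inter_neighborSet (hw.resolve_right hwG)).trans
      (le_ncard_inter_neighborSet_of_subset Set.subset_union_left (h w hwG))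

end Finite

theorem stmt_3_general [Fintype V] (G : SimpleGraph V) (k : ℕ)
    (u v : V)
    (hu : u ∈ coreSet G k) (hv : v ∈ coreSet G k) :
    coreSet (G ⊔ SimpleGraph.fromEdgeSet {s(u, v)}) k = coreSet G k := by
  refine (coreSet_subset_of_neighborSet_subset fun w hw => ?_).antisymm
    (coreSet_mono le_sup_left)
  rw [neighborSet_sup_fromEdgeSet_singleton (ne_of_mem_of_not_mem hu hw).symm
    (ne_of_mem_of_not_mem hv hw).symm]

/-- If both endpoints of the added edge `e = (u, v)` (joining non-adjacent vertices)
already lie in the `k`-core of `G`, then `e` has no followers: the `k`-core vertex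
set is unchanged. -/
theorem stmt_3 [Fintype V] (G : SimpleGraph V) (k : ℕ)
    (u v : V) (huv : u ≠ v) (hadj : ¬ G.Adj u v)
    (hu : u ∈ coreSet G k) (hv : v ∈ coreSet G k) :
    coreSet (G ⊔ SimpleGraph.fromEdgeSet {s(u, v)}) k = coreSet G k :=
  stmt_3_general G k u v hu hv
end

section
/- Let G = (V, E) be a finite simple undirected graph, let k ≥ 1, and let e = (u, v) be an anchor edge joining two non-adjacent vertices of G whose endpoints both lie in the onion layers of the (k-1)-core. If e has at least one follower, i.e. F({e}, G) ≠ ∅, then: (i) if l(u) < l(v) then d*(u) = k - 1; (ii) if l(v) < l(u) then d*(v) = k - 1; and (iii) if l(u) = l(v) then d*(u) = k - 1 and d*(v) = k - 1. -/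
open SimpleGraph

variable {V : Type*}

/-- `onionRemain G k i` is the set of vertices of the `(k-1)`-core of `G` that
survive after peeling the first `i` onion layers (peeling with threshold `k`):
`onionRemain G k 0 = V(C_{k-1}(G))`, and at each step the vertices of degree `< k`
in the current induced subgraph are removed. -/
def onionRemain (G : SimpleGraph V) (k : ℕ) : ℕ → Set V
  | 0 => coreSet G (k - 1)
  | (i + 1) =>
      {u ∈ onionRemain G k i | k ≤ (onionRemain G k i ∩ G.neighborSet u).ncard}

/-- The `i`-th onion layer (`i ≥ 1`): vertices removed at the `i`-th peeling step. -/
def onionLayer (G : SimpleGraph V) (k : ℕ) (i : ℕ) : Set V :=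
  onionRemain G k (i - 1) \ onionRemain G k i

/-- `dstar G k i u` is `d*(u)` for a vertex `u` of layer `i`: the number of
neighbors of `u` lying in strictly higher layers or in the `k`-core, i.e. the
degree of `u` in the graph remaining after peeling layers `1, …, i` (except `u`
itself, which is automatic since `u` is not its own neighbor). -/
noncomputable def dstar (G : SimpleGraph V) (k : ℕ) (i : ℕ) (u : V) : ℕ :=
  (onionRemain G k i ∩ G.neighborSet u).ncard

/-!
If the anchor `uv` has a follower, then `u` lies in the `k`-core `C` of `G + uv`: otherwise `C`
would already satisfy the `k`-core condition in `G`. In `G`, every vertex of `C` keeps at least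
`k - 1` neighbours in `C`, and every vertex other than `u, v` keeps `k`. Hence `C` lies in the
`(k-1)`-core, and peeling removes no vertex of `C` while `u` and `v` survive. If `l(u) ≤ l(v)`,
all of `C \ {u, v}` thus outlives layer `l(u)`, which gives `d*(u) ≥ k - 1`; the reverse
inequality is what places `u` in that layer.
-/

namespace SimpleGraph

variable {G : SimpleGraph V} {k : ℕ}

lemma subset_coreSet {S : Set V} (hS : ∀ w ∈ S, k ≤ (S ∩ G.neighborSet w).ncard) :
    S ⊆ coreSet G k :=
  fun _ hw => ⟨S, hw, hS⟩

lemma ncard_inter_neighborSet_mono [Finite V] {S T : Set V} (h : S ⊆ T) (w : V) :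
    (S ∩ G.neighborSet w).ncard ≤ (T ∩ G.neighborSet w).ncard :=
  Set.ncard_le_ncard (Set.inter_subset_inter_left _ h) (Set.toFinite _)

lemma le_ncard_coreSet_inter_neighborSet [Finite V] {w : V} (hw : w ∈ coreSet G k) :
    k ≤ (coreSet G k ∩ G.neighborSet w).ncard := by
  obtain ⟨S, hwS, hS⟩ := hw
  exact (hS w hwS).trans (ncard_inter_neighborSet_mono (subset_coreSet hS) w)

section AnchorEdge

variable {u v w : V} {S : Set V}

lemma neighborSet_sup_edge_of_ne (hwu : w ≠ u) (hwv : w ≠ v) :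
    (G ⊔ edge u v).neighborSet w = G.neighborSet w := by
  ext x
  simp [edge_adj, hwu, hwv]

lemma exists_neighborSet_sup_edge_subset_insert (w : V) :
    ∃ x, (G ⊔ edge u v).neighborSet w ⊆ insert x (G.neighborSet w) := by
  by_cases hwu : w = u
  · refine ⟨v, fun x hx => ?_⟩
    rcases hx with hx | hx
    · exact Set.mem_insert_of_mem _ hx
    · rcases (edge_adj u v w x).1 hx with ⟨⟨-, rfl⟩ | ⟨rfl, rfl⟩, hne⟩
      · exact Set.mem_insert _ _
      · exact absurd hwu hne
  · refine ⟨u, fun x hx => ?_⟩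
    rcases hx with hx | hx
    · exact Set.mem_insert_of_mem _ hx
    · rcases (edge_adj u v w x).1 hx with ⟨⟨rfl, -⟩ | ⟨-, rfl⟩, -⟩
      · exact absurd rfl hwu
      · exact Set.mem_insert _ _

lemma ncard_inter_neighborSet_sup_edge_le [Finite V] (w : V) :
    (S ∩ (G ⊔ edge u v).neighborSet w).ncard ≤ (S ∩ G.neighborSet w).ncard + 1 := by
  obtain ⟨x, hx⟩ := exists_neighborSet_sup_edge_subset_insert (G := G) (u := u) (v := v) w
  calc (S ∩ (G ⊔ edge u v).neighborSet w).ncard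
      ≤ (insert x (S ∩ G.neighborSet w)).ncard :=
        Set.ncard_le_ncard (fun y ⟨hyS, hy⟩ => (hx hy).imp id fun hy => ⟨hyS, hy⟩)
          (Set.toFinite _)
    _ ≤ (S ∩ G.neighborSet w).ncard + 1 := Set.ncard_insert_le _ _

lemma inter_neighborSet_sup_edge_of_notMem (hu : u ∉ S) (hw : w ∈ S) :
    S ∩ (G ⊔ edge u v).neighborSet w = S ∩ G.neighborSet w := by
  ext x
  simp only [Set.mem_inter_iff, mem_neighborSet, sup_adj, edge_adj, and_congr_right_iff]
  intro hx
  constructor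
  · rintro (h | ⟨⟨rfl, -⟩ | ⟨-, rfl⟩, -⟩)
    exacts [h, absurd hw hu, absurd hx hu]
  · exact Or.inl

lemma coreSet_sup_edge_subset_of_notMem (hu : u ∉ coreSet (G ⊔ edge u v) k) :
    coreSet (G ⊔ edge u v) k ⊆ coreSet G k :=
  fun _ ⟨S, hxS, hS⟩ => ⟨S, hxS, fun w hw =>
    inter_neighborSet_sup_edge_of_notMem (fun huS => hu ⟨S, huS, hS⟩) hw ▸ hS w hw⟩

lemma mem_coreSet_sup_edge_of_followers_nonempty (h : (followers G k {s(u, v)}).Nonempty) :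
    u ∈ coreSet (G ⊔ edge u v) k := by
  by_contra hu
  obtain ⟨x, hx, hxG⟩ := h
  exact hxG (coreSet_sup_edge_subset_of_notMem hu hx)

lemma sub_one_le_ncard_coreSet_sup_edge_inter_neighborSet [Finite V]
    (hw : w ∈ coreSet (G ⊔ edge u v) k) :
    k - 1 ≤ (coreSet (G ⊔ edge u v) k ∩ G.neighborSet w).ncard := by
  have := le_ncard_coreSet_inter_neighborSet hw
  have := ncard_inter_neighborSet_sup_edge_le (G := G) (u := u) (v := v)
    (S := coreSet (G ⊔ edge u v) k) w
  omega

lemma le_ncard_coreSet_sup_edge_inter_neighborSet [Finite V]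
    (hw : w ∈ coreSet (G ⊔ edge u v) k \ {u, v}) :
    k ≤ (coreSet (G ⊔ edge u v) k ∩ G.neighborSet w).ncard := by
  obtain ⟨hwC, hwuv⟩ := hw
  simp only [Set.mem_insert_iff, Set.mem_singleton_iff, not_or] at hwuv
  simpa [neighborSet_sup_edge_of_ne hwuv.1 hwuv.2] using le_ncard_coreSet_inter_neighborSet hwC

end AnchorEdge

section Onion

variable {S T : Set V} {i j : ℕ}

lemma onionRemain_antitone : Antitone (onionRemain G k) :=
  antitone_nat_of_succ_le fun _ _ hx => hx.1

lemma onionLayer_zero : onionLayer G k 0 = ∅ := by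
  simp [onionLayer]

lemma dstar_lt_of_mem_onionLayer [Finite V] {u : V} (hu : u ∈ onionLayer G k i) :
    dstar G k i u < k := by
  obtain _ | j := i
  · simp [onionLayer_zero] at hu
  obtain ⟨huj, husucc⟩ := hu
  have hlt : (onionRemain G k j ∩ G.neighborSet u).ncard < k :=
    lt_of_not_ge fun h => husucc ⟨huj, h⟩
  exact (ncard_inter_neighborSet_mono (onionRemain_antitone j.le_succ) u).trans_lt hlt

lemma diff_subset_onionRemain_succ [Finite V] (hS : S ⊆ onionRemain G k j)
    (hST : ∀ w ∈ S \ T, k ≤ (S ∩ G.neighborSet w).ncard) :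
    S \ T ⊆ onionRemain G k (j + 1) :=
  fun w hw => ⟨hS hw.1, (hST w hw).trans (ncard_inter_neighborSet_mono hS w)⟩

lemma subset_onionRemain [Finite V] (hS : ∀ w ∈ S, k - 1 ≤ (S ∩ G.neighborSet w).ncard)
    (hST : ∀ w ∈ S \ T, k ≤ (S ∩ G.neighborSet w).ncard) (hT : T ⊆ onionRemain G k j) :
    S ⊆ onionRemain G k j := by
  induction j with
  | zero => exact subset_coreSet hS
  | succ j ih =>
    intro w hw
    by_cases hwT : w ∈ T
    · exact hT hwT
    · exact diff_subset_onionRemain_succ (ih (hT.trans (onionRemain_antitone j.le_succ))) hST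
        ⟨hw, hwT⟩

lemma dstar_eq_sub_one_of_followers_nonempty [Finite V] {u v : V} {iu iv : ℕ}
    (hadj : ¬ G.Adj u v) (hu : u ∈ onionLayer G k iu) (hv : v ∈ onionLayer G k iv)
    (hle : iu ≤ iv) (hfol : (followers G k {s(u, v)}).Nonempty) :
    dstar G k iu u = k - 1 := by
  obtain _ | j := iu
  · simp [onionLayer_zero] at hu
  set C := coreSet (G ⊔ edge u v) k
  have huC : u ∈ C := mem_coreSet_sup_edge_of_followers_nonempty hfol
  have hT : {u, v} ⊆ onionRemain G k j := by
    rintro w (rfl | rfl)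
    · exact hu.1
    · exact onionRemain_antitone (by omega) hv.1
  have hCj : C ⊆ onionRemain G k j :=
    subset_onionRemain (fun _ => sub_one_le_ncard_coreSet_sup_edge_inter_neighborSet)
      (fun _ => le_ncard_coreSet_sup_edge_inter_neighborSet) hT
  have hC : C \ {u, v} ⊆ onionRemain G k (j + 1) :=
    diff_subset_onionRemain_succ hCj fun _ => le_ncard_coreSet_sup_edge_inter_neighborSet
  have hN : C ∩ G.neighborSet u ⊆ (C \ {u, v}) ∩ G.neighborSet u := by
    rintro x ⟨hxC, hx⟩
    refine ⟨⟨hxC, ?_⟩, hx⟩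
    rintro (rfl | rfl)
    exacts [G.irrefl hx, hadj hx]
  refine le_antisymm (Nat.le_sub_one_of_lt (dstar_lt_of_mem_onionLayer hu)) ?_
  calc k - 1 ≤ (C ∩ G.neighborSet u).ncard :=
        sub_one_le_ncard_coreSet_sup_edge_inter_neighborSet huC
    _ ≤ ((C \ {u, v}) ∩ G.neighborSet u).ncard := Set.ncard_le_ncard hN (Set.toFinite _)
    _ ≤ dstar G k (j + 1) u := ncard_inter_neighborSet_mono hC u

end Onion

end SimpleGraph

theorem stmt_7_general [Fintype V] (G : SimpleGraph V) (k : ℕ)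
    (u v : V) (hadj : ¬ G.Adj u v)
    (iu iv : ℕ)
    (hu : u ∈ onionLayer G k iu) (hv : v ∈ onionLayer G k iv)
    (hfol : (followers G k {s(u, v)}).Nonempty) :
    (iu < iv → dstar G k iu u = k - 1) ∧
    (iv < iu → dstar G k iv v = k - 1) ∧
    (iu = iv → dstar G k iu u = k - 1 ∧ dstar G k iv v = k - 1) := by
  have hu_eq (h : iu ≤ iv) := dstar_eq_sub_one_of_followers_nonempty hadj hu hv h hfol
  have hv_eq (h : iv ≤ iu) := dstar_eq_sub_one_of_followers_nonempty (fun h => hadj h.symm)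
    hv hu h (Sym2.eq_swap ▸ hfol)
  exact ⟨fun h => hu_eq h.le, fun h => hv_eq h.le, fun h => ⟨hu_eq h.le, hv_eq h.ge⟩⟩

/-- Onion-layer based pruning: if the anchor edge `e = (u, v)` (non-adjacent
endpoints, both lying in onion layers of the `(k-1)`-core) has at least one
follower, then (i) if `l(u) < l(v)` then `d*(u) = k - 1`; (ii) if `l(v) < l(u)`
then `d*(v) = k - 1`; (iii) if `l(u) = l(v)` then `d*(u) = d*(v) = k - 1`. -/
theorem stmt_7 [Fintype V] (G : SimpleGraph V) (k : ℕ) (hk : 1 ≤ k)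
    (u v : V) (huv : u ≠ v) (hadj : ¬ G.Adj u v)
    (iu iv : ℕ) (hiu : 1 ≤ iu) (hiv : 1 ≤ iv)
    (hu : u ∈ onionLayer G k iu) (hv : v ∈ onionLayer G k iv)
    (hfol : (followers G k {s(u, v)}).Nonempty) :
    (iu < iv → dstar G k iu u = k - 1) ∧
    (iv < iu → dstar G k iv v = k - 1) ∧
    (iu = iv → dstar G k iu u = k - 1 ∧ dstar G k iv v = k - 1) :=
  stmt_7_general G k u v hadj iu iv hu hv hfol
end
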